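/- arXiv:1902.07871 — 2 statements merged into one kernel-verified Lean document; each statement's English description precedes it below -/
import Mathlib

section
/- Let (Z_k) be a sequence in 2^ℕ, let (c_k) be reals with 0 < c_k ≤ 1 for each k and Σ_k c_k = 1, and let μ = Σ_k c_k·δ_{Z_k}, where δ_Z is the Dirac measure concentrated on {Z}. Then μ is ML absolutely continuous if and only if every Z_k is Martin-Löf random. -/
open MeasureTheory Filter

/-- Cantor space: the space of infinite binary sequences. -/
abbrev Cantor : Type := ℕ → Bool

/-- Finite binary strings. -/
abbrev BStr : Type := List Bool

/-- The cylinder set of sequences extending the string `x`. -/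
def cyl (x : BStr) : Set Cantor := {Z | ∀ i : Fin x.length, Z i.1 = x.get i}

/-- The string of the first `n` bits of `Z`. -/
def seg (Z : Cantor) (n : ℕ) : BStr := List.ofFn fun i : Fin n => Z i.1

/-- `lam` is the uniform (fair-coin product) measure: every cylinder `[x]`
has measure `2^{-|x|}`. -/
def IsUniform (lam : Measure Cantor) : Prop :=
  ∀ x : BStr, lam (cyl x) = (2 : ENNReal)⁻¹ ^ x.length

/-- `(G_m)` is a Martin-Löf test with respect to the measure `ρ`:
the sets `G_m` are uniformly effectively open and `ρ (G_m) ≤ 2^{-m}`. -/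
def IsMLTest (ρ : Measure Cantor) (G : ℕ → Set Cantor) : Prop :=
  (∃ σ : ℕ → ℕ → BStr, Computable₂ σ ∧ ∀ m, G m = ⋃ i, cyl (σ m i)) ∧
  ∀ m, ρ (G m) ≤ (2 : ENNReal)⁻¹ ^ m

/-- `μ` is Martin-Löf absolutely continuous in `ρ`: `inf_m μ(G_m) = 0`
for every `ρ`-Martin-Löf test `(G_m)`. -/
def MLAC (μ ρ : Measure Cantor) : Prop :=
  ∀ G : ℕ → Set Cantor, IsMLTest ρ G → ⨅ m, μ (G m) = 0

/-- `Z` is Martin-Löf random with respect to `lam`. -/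
def MLRandom (lam : Measure Cantor) (Z : Cantor) : Prop :=
  ∀ G : ℕ → Set Cantor, IsMLTest lam G → Z ∉ ⋂ m, G m

/-- `ρ` is a computable measure: `ρ [x]` is a computable real, uniformly in `x`. -/
def ComputableMeasure (ρ : Measure Cantor) : Prop :=
  ∃ q : BStr → ℕ → ℚ, Computable₂ q ∧
    ∀ x k, |(q x k : ℝ) - (ρ (cyl x)).toReal| ≤ (2 : ℝ)⁻¹ ^ k

/-- `U` is a universal plain machine. -/
def UniversalPlain (U : BStr →. BStr) : Prop :=
  Partrec U ∧ ∀ M : BStr →. BStr, Partrec M →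
    ∃ c : ℕ, ∀ p x, x ∈ M p → ∃ q : BStr, q.length ≤ p.length + c ∧ x ∈ U q

/-- The domain of `M` is an antichain under the prefix relation. -/
def PrefixFreeDom (M : BStr →. BStr) : Prop :=
  ∀ p q : BStr, (M p).Dom → (M q).Dom → p <+: q → p = q

/-- `U` is a universal prefix-free machine. -/
def UniversalPrefixFree (U : BStr →. BStr) : Prop :=
  Partrec U ∧ PrefixFreeDom U ∧
  ∀ M : BStr →. BStr, Partrec M → PrefixFreeDom M →
    ∃ c : ℕ, ∀ p x, x ∈ M p → ∃ q : BStr, q.length ≤ p.length + c ∧ x ∈ U q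

/-- Kolmogorov complexity of the string `x` with respect to the machine `U`:
the minimal length of a `U`-description of `x`. -/
noncomputable def cpx (U : BStr →. BStr) (x : BStr) : ℕ :=
  sInf {n | ∃ q : BStr, q.length = n ∧ x ∈ U q}

/-- A natural number `n` identified with the string `0^n`. -/
def numStr (n : ℕ) : BStr := List.replicate n false

/-- Complexity of the natural number `n` (i.e., of the string `0^n`). -/
noncomputable def cpxN (U : BStr →. BStr) (n : ℕ) : ℕ := cpx U (numStr n)

/-- The `μ`-average complexity of the strings of length `n`:
`Σ_{|x|=n} cpx(x) · μ[x]`. -/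
noncomputable def avgCpx (U : BStr →. BStr) (μ : Measure Cantor) (n : ℕ) : ℝ :=
  ∑ v : Fin n → Bool, (cpx U (List.ofFn v) : ℝ) * (μ (cyl (List.ofFn v))).toReal

/-- A measure `μ` is trivial for the complexity given by the machine `U`
(e.g. K-trivial when `U` is the universal prefix-free machine, C-trivial
when `U` is the universal plain machine). -/
def MeasTrivial (U : BStr →. BStr) (μ : Measure Cantor) : Prop :=
  ∃ c : ℝ, ∀ n : ℕ, avgCpx U μ n ≤ (cpxN U n : ℝ) + c


/-! A measurable set is null for `μ = Σ c_k δ_{Z_k}` (all `c_k > 0`) iff it contains no `Z_k`,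
so it suffices that, for a finite measure, ML absolute continuity amounts to every set
`⋂ m, G m` being `μ`-null. Replacing a test `G` by the nested test `m ↦ ⋃_{n > m} G n` keeps the
bound `2^{-m}` (a geometric tail), and for a nested test continuity from above turns
`inf_m μ (G m)` into `μ (⋂ m, G m)`. -/

lemma measurableSet_cyl (x : BStr) : MeasurableSet (cyl x) := by
  have h : cyl x = ⋂ i : Fin x.length, (fun Z : Cantor => Z i.1) ⁻¹' {x.get i} := by
    ext; simp [cyl]
  rw [h]
  exact .iInter fun i => measurable_pi_apply i.1 (measurableSet_singleton _)

lemma IsMLTest.measurableSet {ρ : Measure Cantor} {G : ℕ → Set Cantor} (hG : IsMLTest ρ G)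
    (m : ℕ) : MeasurableSet (G m) := by
  obtain ⟨⟨σ, -, hGσ⟩, -⟩ := hG
  rw [hGσ m]
  exact .iUnion fun i => measurableSet_cyl _

def tailUnion (G : ℕ → Set Cantor) (m : ℕ) : Set Cantor := ⋃ j, G (m + 1 + j)

lemma subset_tailUnion (G : ℕ → Set Cantor) (m : ℕ) : G (m + 1) ⊆ tailUnion G m :=
  Set.subset_iUnion_of_subset 0 subset_rfl

lemma antitone_tailUnion (G : ℕ → Set Cantor) : Antitone (tailUnion G) := by
  intro m₁ m₂ h
  refine Set.iUnion_subset fun j => Set.subset_iUnion_of_subset (j + (m₂ - m₁)) ?_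
  rw [show m₁ + 1 + (j + (m₂ - m₁)) = m₂ + 1 + j by omega]

lemma tsum_inv_two_pow_add_succ (m : ℕ) :
    ∑' j : ℕ, (2 : ENNReal)⁻¹ ^ (m + 1 + j) = (2 : ENNReal)⁻¹ ^ m := by
  simp_rw [pow_add, ENNReal.tsum_mul_left, ENNReal.tsum_geometric_two, pow_one, mul_assoc,
    ENNReal.inv_mul_cancel two_ne_zero ENNReal.ofNat_ne_top, mul_one]

lemma IsMLTest.tailUnion {ρ : Measure Cantor} {G : ℕ → Set Cantor} (hG : IsMLTest ρ G) :
    IsMLTest ρ (tailUnion G) := by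
  obtain ⟨⟨σ, hσ, hGσ⟩, hbound⟩ := hG
  refine ⟨⟨fun m n => σ (m + 1 + n.unpair.1) n.unpair.2, ?_, fun m => ?_⟩, fun m => ?_⟩
  · exact hσ.comp
      ((Primrec.nat_add.comp (Primrec.nat_add.comp Primrec.fst (Primrec.const 1))
        (Primrec.fst.comp (Primrec.unpair.comp Primrec.snd))).to_comp)
      (Primrec.snd.comp (Primrec.unpair.comp Primrec.snd)).to_comp
  · ext Y
    simp only [_root_.tailUnion, hGσ, Set.mem_iUnion]
    constructor
    · rintro ⟨j, i, hi⟩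
      exact ⟨Nat.pair j i, by simpa using hi⟩
    · rintro ⟨n, hn⟩
      exact ⟨n.unpair.1, n.unpair.2, hn⟩
  · calc ρ (_root_.tailUnion G m) ≤ ∑' j, ρ (G (m + 1 + j)) := measure_iUnion_le _
      _ ≤ ∑' j : ℕ, (2 : ENNReal)⁻¹ ^ (m + 1 + j) := ENNReal.tsum_le_tsum fun j => hbound _
      _ = (2 : ENNReal)⁻¹ ^ m := tsum_inv_two_pow_add_succ m

theorem mlac_iff_measure_iInter_eq_zero {μ ρ : Measure Cantor} [IsFiniteMeasure μ] :
    MLAC μ ρ ↔ ∀ G, IsMLTest ρ G → μ (⋂ m, G m) = 0 := by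
  refine ⟨fun h G hG => ?_, fun h G hG => ?_⟩
  · exact le_antisymm ((le_iInf fun m => measure_mono (Set.iInter_subset G m)).trans
      (h G hG).le) bot_le
  · have hlim : μ (⋂ m, tailUnion G m) = ⨅ m, μ (tailUnion G m) :=
      (antitone_tailUnion G).measure_iInter
        (fun m => (hG.tailUnion.measurableSet m).nullMeasurableSet) ⟨0, measure_ne_top μ _⟩
    refine le_antisymm ?_ bot_le
    calc ⨅ m, μ (G m) ≤ ⨅ m, μ (G (m + 1)) := le_iInf fun m => iInf_le _ _
      _ ≤ ⨅ m, μ (tailUnion G m) := iInf_mono fun m => measure_mono (subset_tailUnion G m)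
      _ = 0 := hlim ▸ h _ hG.tailUnion

section AtomicMeasure

variable {ι α : Type*} [MeasurableSpace α] (w : ι → ENNReal) (x : ι → α)

lemma isFiniteMeasure_sum_smul_dirac (hw : ∑' i, w i ≠ ⊤) :
    IsFiniteMeasure (Measure.sum fun i => w i • Measure.dirac (x i)) := by
  constructor
  simpa [Measure.sum_apply _ MeasurableSet.univ] using hw.lt_top

lemma sum_smul_dirac_apply_eq_zero_iff (hw : ∀ i, w i ≠ 0) {s : Set α}
    (hs : MeasurableSet s) :
    (Measure.sum fun i => w i • Measure.dirac (x i)) s = 0 ↔ ∀ i, x i ∉ s := by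
  simp [Measure.sum_apply_eq_zero' hs, dirac_eq_zero_iff_not_mem hs, hw]

end AtomicMeasure

theorem discrete_measure_MLAC_iff_atoms_random_general
    (lam : Measure Cantor)
    (Z : ℕ → Cantor) (c : ℕ → ℝ)
    (hpos : ∀ k, 0 < c k) (hsum : ∑' k, c k = 1) :
    MLAC (Measure.sum fun k => ENNReal.ofReal (c k) • Measure.dirac (Z k)) lam ↔
      ∀ k, MLRandom lam (Z k) := by
  have hc : Summable c := by
    by_contra h
    simp [tsum_eq_zero_of_not_summable h] at hsum
  have hmass : ∑' k, ENNReal.ofReal (c k) ≠ ⊤ := by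
    rw [← ENNReal.ofReal_tsum_of_nonneg (fun k => (hpos k).le) hc]
    exact ENNReal.ofReal_ne_top
  have := isFiniteMeasure_sum_smul_dirac _ Z hmass
  have hw : ∀ k, ENNReal.ofReal (c k) ≠ 0 := fun k => (ENNReal.ofReal_pos.2 (hpos k)).ne'
  rw [mlac_iff_measure_iInter_eq_zero]
  refine ⟨fun h k G hG => ?_, fun h G hG => ?_⟩
  · exact (sum_smul_dirac_apply_eq_zero_iff _ Z hw (.iInter hG.measurableSet)).1 (h G hG) k
  · exact (sum_smul_dirac_apply_eq_zero_iff _ Z hw (.iInter hG.measurableSet)).2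
      fun k => h k G hG

/-- a countable convex combination `μ = Σ_k c_k δ_{Z_k}`
(`0 < c_k ≤ 1`, `Σ_k c_k = 1`) is ML absolutely continuous iff every `Z_k`
is Martin-Löf random. -/
theorem discrete_measure_MLAC_iff_atoms_random
    (lam : Measure Cantor) (hlam : IsUniform lam)
    (Z : ℕ → Cantor) (c : ℕ → ℝ)
    (hpos : ∀ k, 0 < c k) (hle : ∀ k, c k ≤ 1) (hsum : ∑' k, c k = 1) :
    MLAC (Measure.sum fun k => ENNReal.ofReal (c k) • Measure.dirac (Z k)) lam ↔
      ∀ k, MLRandom lam (Z k) :=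
  discrete_measure_MLAC_iff_atoms_random_general lam Z c hpos hsum
end

section
/- There is a constant c such that K(x ∣ n, C(n)) ≤ 2·(C(x) − C(n)) + c for every n and every binary string x of length n. -/
/-!
Write `k = C(n)` and `e = C(x) - k`. Fewer than `2 ^ d` strings of length `n` have plain
descriptions of length at most `k + e`, where `d = e + 2 log e + O(1)`: otherwise `n` would be
one of fewer than `2 ^ (k + e + 1 - d)` lengths carrying `2 ^ d` such strings, and `n` could be
described by a self-delimiting code of `d` and an index in `2 log d + k + e - d + O(1) < k` bits.
Enumerating these strings in order of appearance, `x` is determined, given `n` and `k`, by a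
self-delimiting code of `e` followed by its index in `d` bits. This description is prefix-free
and has `e + 4 log e + O(1) ≤ 2 e + O(1)` bits.
-/

open MeasureTheory Filter

/-- A universal plain machine with an auxiliary (conditioning) input;
natural-number conditions are identified with unary strings and pairs
are encoded by the computable pairing `Nat.pair`. -/
def UniversalPlainCond (U : BStr → ℕ →. BStr) : Prop :=
  Partrec₂ U ∧ ∀ M : BStr → ℕ →. BStr, Partrec₂ M →
    ∃ c : ℕ, ∀ p y x, x ∈ M p y → ∃ q : BStr, q.length ≤ p.length + c ∧ x ∈ U q y

/-- For every condition `y`, the domain of `M (·) y` is an antichain under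
the prefix relation. -/
def PrefixFreeDomCond (M : BStr → ℕ →. BStr) : Prop :=
  ∀ (y : ℕ) (p q : BStr), (M p y).Dom → (M q y).Dom → p <+: q → p = q

/-- A universal prefix-free machine with an auxiliary (conditioning) input. -/
def UniversalPrefixFreeCond (U : BStr → ℕ →. BStr) : Prop :=
  Partrec₂ U ∧ PrefixFreeDomCond U ∧
  ∀ M : BStr → ℕ →. BStr, Partrec₂ M → PrefixFreeDomCond M →
    ∃ c : ℕ, ∀ p y x, x ∈ M p y → ∃ q : BStr, q.length ≤ p.length + c ∧ x ∈ U q y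

/-- Conditional Kolmogorov complexity of `x` given `y`, with respect to the
machine `U` with auxiliary input. -/
noncomputable def cpxCond (U : BStr → ℕ →. BStr) (x : BStr) (y : ℕ) : ℕ :=
  sInf {n | ∃ q : BStr, q.length = n ∧ x ∈ U q y}

def binVal (u : BStr) : ℕ := u.foldr (fun b n => 2 * n + b.toNat) 0

@[simp] lemma binVal_nil : binVal [] = 0 := rfl

@[simp] lemma binVal_cons (b : Bool) (u : BStr) : binVal (b :: u) = 2 * binVal u + b.toNat := rfl

lemma binVal_append (u v : BStr) : binVal (u ++ v) = binVal u + 2 ^ u.length * binVal v := by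
  induction u with
  | nil => simp
  | cons b u ih => simp only [List.cons_append, binVal_cons, ih, List.length_cons, pow_succ]; ring

lemma binVal_lt (u : BStr) : binVal u < 2 ^ u.length := by
  induction u with
  | nil => simp
  | cons b u ih => cases b <;> simp [pow_succ] <;> omega

lemma exists_binVal_eq {ℓ i : ℕ} (h : i < 2 ^ ℓ) :
    ∃ u : BStr, u.length = ℓ ∧ binVal u = i := by
  induction ℓ generalizing i with
  | zero => exact ⟨[], rfl, by simp_all⟩
  | succ ℓ ih =>
    obtain ⟨u, hu, hval⟩ := ih (i := i / 2) (by rw [pow_succ] at h; omega)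
    refine ⟨decide (i % 2 = 1) :: u, by simp [hu], ?_⟩
    rcases Nat.mod_two_eq_zero_or_one i with h2 | h2 <;> simp [hval, h2] <;> omega

lemma binVal_inj_of_length_eq {u v : BStr} (hl : u.length = v.length) (h : binVal u = binVal v) :
    u = v := by
  induction u generalizing v with
  | nil => exact (List.length_eq_zero_iff.mp hl.symm).symm
  | cons b u ih =>
    obtain _ | ⟨b', v⟩ := v
    · simp at hl
    · simp only [binVal_cons] at h
      have hb : b = b' := by
        cases b <;> cases b' <;> simp only [Bool.toNat_false, Bool.toNat_true] at h <;>
          first | rfl | omega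
      subst hb
      rw [ih (by simpa using hl) (by omega)]

/-- `u ↦ binVal (u ++ [true])` injects the strings of length `< m` into `[1, 2 ^ m)`. -/
lemma card_lt_two_pow_of_length_lt {s : Finset BStr} {m : ℕ} (h : ∀ u ∈ s, u.length < m) :
    s.card < 2 ^ m := by
  have hval (u : BStr) : binVal (u ++ [true]) = binVal u + 2 ^ u.length := by
    simp [binVal_append]
  have hlog (u : BStr) : Nat.log 2 (binVal (u ++ [true])) = u.length := by
    have := binVal_lt u
    rw [hval]
    exact Nat.log_eq_of_pow_le_of_lt_pow (by omega) (by rw [pow_succ]; omega)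
  have hinj : Set.InjOn (fun u => binVal (u ++ [true])) s := fun u _ v _ huv => by
    simp only at huv
    have hl : u.length = v.length := by rw [← hlog u, ← hlog v, huv]
    exact binVal_inj_of_length_eq hl (by simp only [hval, hl] at huv; omega)
  have hmaps : Set.MapsTo (fun u => binVal (u ++ [true])) s (Finset.Ico 1 (2 ^ m)) := by
    intro u hu
    have := binVal_lt u
    have := Nat.pow_le_pow_right two_pos (h u hu)
    simp only [Finset.coe_Ico, Set.mem_Ico, hval, pow_succ] at *
    omega
  have := Finset.card_le_card_of_injOn _ hmaps hinj
  simp only [Nat.card_Ico] at this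
  have := Nat.one_le_two_pow (n := m)
  omega

lemma length_lt_two_pow_of_describable {U : BStr →. BStr} {L : List BStr} {m : ℕ}
    (hL : L.Nodup) (h : ∀ x ∈ L, ∃ q : BStr, q.length < m ∧ x ∈ U q) : L.length < 2 ^ m := by
  classical
  choose! desc hlen hdesc using h
  have hinj : Set.InjOn desc L.toFinset := fun x hx y hy hxy => by
    have hy' := hdesc y (List.mem_toFinset.mp hy)
    rw [← hxy] at hy'
    exact Part.mem_unique (hdesc x (List.mem_toFinset.mp hx)) hy'
  rw [← List.toFinset_card_of_nodup hL, ← Finset.card_image_of_injOn hinj]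
  exact card_lt_two_pow_of_length_lt fun q hq => by
    obtain ⟨x, hx, rfl⟩ := Finset.mem_image.mp hq
    exact hlen x (List.mem_toFinset.mp hx)

def selfDelim (u : BStr) : BStr := List.replicate u.length true ++ false :: u

lemma length_selfDelim (u : BStr) : (selfDelim u).length = 2 * u.length + 1 := by
  simp [selfDelim]; omega

def parseSelfDelim (p : BStr) : Option (BStr × BStr) :=
  if 2 * (p.takeWhile id).length + 1 ≤ p.length then
    some ((p.drop ((p.takeWhile id).length + 1)).take (p.takeWhile id).length,
      p.drop (2 * (p.takeWhile id).length + 1))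
  else none

lemma parseSelfDelim_selfDelim_append (u r : BStr) :
    parseSelfDelim (selfDelim u ++ r) = some (u, r) := by
  have hw : (selfDelim u ++ r).takeWhile id = List.replicate u.length true := by
    simp [selfDelim]
  have hd : (selfDelim u ++ r).drop (u.length + 1) = u ++ r := by
    rw [selfDelim, List.append_assoc, List.drop_append]
    simp
  rw [parseSelfDelim, hw, List.length_replicate, if_pos (by simp [length_selfDelim]), hd,
    show 2 * u.length + 1 = u.length + 1 + u.length by omega, ← List.drop_drop, hd]
  simp

lemma eq_replicate_true_append_false_cons (p : BStr) (h : (p.takeWhile id).length < p.length) :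
    ∃ w, p = List.replicate (p.takeWhile id).length true ++ false :: w := by
  have hdrop : p.dropWhile id ≠ [] := by
    intro hnil
    have := congrArg List.length (List.takeWhile_append_dropWhile (p := id) (l := p))
    simp [hnil] at this
    omega
  obtain ⟨b, w, hbw⟩ := List.exists_cons_of_ne_nil hdrop
  have hb : b = false := by simpa [hbw] using List.head_dropWhile_not id hdrop
  refine ⟨w, ?_⟩
  conv_lhs => rw [← List.takeWhile_append_dropWhile (p := id) (l := p)]
  rw [hbw, hb]
  exact congrArg (· ++ false :: w)
    (List.eq_replicate_iff.mpr ⟨rfl, fun x hx => List.mem_takeWhile_imp (p := id) hx⟩)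

lemma parseSelfDelim_eq_some_iff {p u r : BStr} :
    parseSelfDelim p = some (u, r) ↔ p = selfDelim u ++ r := by
  refine ⟨fun h => ?_, fun h => h ▸ parseSelfDelim_selfDelim_append u r⟩
  have hle : 2 * (p.takeWhile id).length + 1 ≤ p.length := by
    by_contra hlt
    simp [parseSelfDelim, hlt] at h
  obtain ⟨w, hw⟩ := eq_replicate_true_append_false_cons p (by omega)
  set ℓ := (p.takeWhile id).length
  have hℓ : ℓ ≤ w.length := by
    have := congrArg List.length hw
    simp at this
    omega
  have hp : p = selfDelim (w.take ℓ) ++ w.drop ℓ := by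
    rw [selfDelim, List.length_take_of_le hℓ, List.append_assoc, List.cons_append,
      List.take_append_drop, hw]
  rw [hp, parseSelfDelim_selfDelim_append, Option.some.injEq, Prod.mk.injEq] at h
  rw [hp, h.1, h.2]

lemma parseSelfDelim_append {p u r : BStr} (h : parseSelfDelim p = some (u, r)) (s : BStr) :
    parseSelfDelim (p ++ s) = some (u, r ++ s) := by
  rw [parseSelfDelim_eq_some_iff] at h ⊢
  simp [h]

section Accumulate

variable {α : Type*} [DecidableEq α]

/-- Each element once, newest first: `l ∪ acc` keeps `acc` as a suffix. -/
def accumUnion (A : ℕ → List α) : ℕ → List α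
  | 0 => []
  | t + 1 => A t ∪ accumUnion A t

lemma accumUnion_suffix (A : ℕ → List α) {t t' : ℕ} (h : t ≤ t') :
    accumUnion A t <:+ accumUnion A t' := by
  induction h with
  | refl => exact List.suffix_refl _
  | step _ ih => exact ih.trans (List.suffix_union_right _ _)

lemma mem_accumUnion {A : ℕ → List α} {t : ℕ} {a : α} :
    a ∈ accumUnion A t ↔ ∃ t' < t, a ∈ A t' := by
  induction t with
  | zero => simp [accumUnion]
  | succ t ih =>
    simp only [accumUnion, List.mem_union_iff, ih, Nat.lt_succ_iff_lt_or_eq]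
    grind

lemma nodup_accumUnion (A : ℕ → List α) (t : ℕ) : (accumUnion A t).Nodup := by
  induction t with
  | zero => exact List.nodup_nil
  | succ t ih => exact ih.union _

end Accumulate

/-- Lists growing at the front have stable indices once reversed. -/
lemma mem_rfindOpt_getElem?_reverse {α : Type*} {A : ℕ → List α}
    (hA : ∀ {t t'}, t ≤ t' → A t <:+ A t')
    {t i : ℕ} {a : α} (h : (A t).reverse[i]? = some a) :
    a ∈ Nat.rfindOpt fun t => (A t).reverse[i]? := by
  refine (Nat.rfindOpt_mono fun {a' t₁ t₂} h₁₂ ha' => ?_).mpr ⟨t, h⟩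
  obtain ⟨s, hs⟩ := List.reverse_prefix.mpr (hA h₁₂)
  rw [← hs, List.getElem?_append_left (List.getElem?_eq_some_iff.mp ha').1]
  exact ha'

section Computability

open Primrec

lemma primrec_binVal : Primrec binVal :=
  list_foldr .id (const 0)
    (nat_add.comp (nat_mul.comp (const 2) (snd.comp snd))
      (Primrec.dom_bool Bool.toNat |>.comp (fst.comp snd))).to₂

lemma primrec_parseSelfDelim : Primrec parseSelfDelim := by
  have hℓ : Primrec fun p : BStr => (p.takeWhile id).length :=
    list_length.comp (list_takeWhile .id)
  exact Primrec.ite (nat_le.comp (succ.comp (nat_mul.comp (const 2) hℓ)) list_length)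
    (option_some.comp (pair (list_take.comp hℓ (list_drop.comp (succ.comp hℓ) .id))
      (list_drop.comp (succ.comp (nat_mul.comp (const 2) hℓ)) .id)))
    (const none)

variable {α β : Type*} [Primcodable α] [Primcodable β]

lemma primrec_list_union [DecidableEq α] :
    Primrec₂ ((· ∪ ·) : List α → List α → List α) := by
  have hinsert : Primrec₂ (List.insert : α → List α → List α) :=
    (Primrec.ite ((PrimrecRel.exists_mem_list Primrec.eq).comp snd fst) snd
      (list_cons.comp fst snd)).to₂.of_eq fun a l => by
        by_cases h : a ∈ l <;> simp [h]
  exact (list_foldr fst snd (hinsert.comp (fst.comp snd) (snd.comp snd)).to₂).to₂.of_eq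
    fun l₁ l₂ => (List.union_def l₁ l₂).symm

lemma primrec_accumUnion [DecidableEq α] {A : β → ℕ → List α}
    (hA : Primrec₂ A) : Primrec₂ fun b t => accumUnion (A b) t := by
  have hstep : Primrec₂ fun (bt : β × ℕ) (s : ℕ × List α) => A bt.1 s.1 ∪ s.2 :=
    primrec_list_union.comp (hA.comp (fst.comp fst) (fst.comp snd)) (snd.comp snd)
  refine (nat_rec' snd (const []) hstep).to₂.of_eq fun b t => ?_
  induction t with
  | zero => rfl
  | succ t ih => simp only at ih ⊢; rw [ih]; rfl

lemma primrec_numStr : Primrec numStr :=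
  (list_map list_range (const false).to₂).of_eq fun n => by simp [numStr, List.map_const']

open Nat.Partrec (Code) in
theorem Partrec.exists_primrec_stages {σ : Type*} [Primcodable σ]
    {f : α →. σ} (hf : Partrec f) :
    ∃ S : ℕ → List (α × σ), Primrec S ∧ ∀ a b, b ∈ f a ↔ ∃ t, (a, b) ∈ S t := by
  obtain ⟨c, hc⟩ := Code.exists_code.mp hf
  let step (t j : ℕ) : Option (α × σ) :=
    (Code.evaln t c j).bind fun v =>
      (Encodable.decode (α := α) j).bind fun a => (Encodable.decode (α := σ) v).map (a, ·)
  have hstep : Primrec₂ step := by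
    have hev : Primrec₂ fun t j => Code.evaln t c j :=
      Code.primrec_evaln.comp (pair (pair fst (const c)) snd)
    have hpair : Primrec₂ fun (v : ℕ) (a : α) => (Encodable.decode (α := σ) v).map (a, ·) :=
      option_map (Primrec.decode.comp fst) (pair (snd.comp fst) snd).to₂
    exact option_bind hev
      (option_bind (Primrec.decode.comp (snd.comp fst)) (hpair.comp (snd.comp fst) snd).to₂).to₂
  refine ⟨fun t => (List.range t).filterMap (step t),
    listFilterMap list_range hstep, fun a b => ⟨fun hb => ?_, ?_⟩⟩
  · have : Encodable.encode b ∈ Code.eval c (Encodable.encode a) := by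
      simpa [hc] using Part.mem_map Encodable.encode hb
    obtain ⟨k, hk⟩ := Code.evaln_complete.mp this
    refine ⟨max k (Encodable.encode a + 1), List.mem_filterMap.mpr
      ⟨Encodable.encode a, List.mem_range.mpr (by omega), ?_⟩⟩
    simp [step, Option.mem_def.mp (Code.evaln_mono (le_max_left _ _) hk)]
  · rintro ⟨t, ht⟩
    obtain ⟨j, -, hj⟩ := List.mem_filterMap.mp ht
    simp only [step, Option.bind_eq_some_iff, Option.map_eq_some_iff, Prod.mk.injEq] at hj
    obtain ⟨v, hv, a', ha', b', hb', rfl, rfl⟩ := hj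
    have := Code.evaln_sound hv
    simp only [hc, ha', Part.coe_some, Part.bind_some, Part.mem_map_iff] at this
    obtain ⟨b'', hb'', rfl⟩ := this
    rw [Encodable.encodek, Option.some.injEq] at hb'
    rwa [← hb']

end Computability

lemma length_mul_le_of_le_length_filter {α β : Type*} [DecidableEq α] [DecidableEq β]
    {L : List α} {K : List β} (hL : L.Nodup) (hK : K.Nodup) (g : α → β) {N : ℕ}
    (h : ∀ b ∈ K, N ≤ (L.filter (g · = b)).length) : K.length * N ≤ L.length := by
  have hfiber (b : β) : (L.filter (g · = b)).length = (L.toFinset.filter (g · = b)).card := by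
    rw [← List.toFinset_card_of_nodup (hL.filter _), List.toFinset_filter]
    simp
  calc K.length * N = K.toFinset.card • N := by rw [List.toFinset_card_of_nodup hK, smul_eq_mul]
    _ ≤ ∑ b ∈ K.toFinset, (L.toFinset.filter (g · = b)).card :=
      Finset.card_nsmul_le_sum _ _ _ fun b hb => hfiber b ▸ h b (List.mem_toFinset.mp hb)
    _ = (L.toFinset.filter (g · ∈ K.toFinset)).card :=
      Finset.sum_card_fiberwise_eq_card_filter _ _ _
    _ ≤ L.length := (Finset.card_filter_le _ _).trans (List.toFinset_card_le L)

section Enumeration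

variable (S : ℕ → List (BStr × BStr))

def described (m : ℕ) : ℕ → List BStr :=
  accumUnion fun t => (S t).filterMap fun qx => if qx.1.length < m then some qx.2 else none

def lengthClass (m n t : ℕ) : List BStr := (described S m t).filter (·.length = n)

def heavyLengths (d m : ℕ) : ℕ → List ℕ :=
  accumUnion fun t =>
    ((described S m t).map List.length).filter fun n => 2 ^ d ≤ (lengthClass S m n t).length

variable {S}

lemma mem_described {m t : ℕ} {x : BStr} :
    x ∈ described S m t ↔ ∃ t' < t, ∃ q : BStr, q.length < m ∧ (q, x) ∈ S t' := by
  simp only [described, mem_accumUnion, List.mem_filterMap, Option.ite_none_right_eq_some,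
    Option.some.injEq, Prod.exists]
  grind

lemma lengthClass_suffix (m n : ℕ) {t t' : ℕ} (h : t ≤ t') :
    lengthClass S m n t <:+ lengthClass S m n t' :=
  (accumUnion_suffix _ h).filter _

lemma mem_heavyLengths {d m t n : ℕ} :
    n ∈ heavyLengths S d m t ↔ ∃ t' < t, 2 ^ d ≤ (lengthClass S m n t').length := by
  simp only [heavyLengths, mem_accumUnion, List.mem_filter, List.mem_map, decide_eq_true_eq]
  refine exists_congr fun t' => and_congr_right fun _ => ⟨fun h => h.2, fun h => ⟨?_, h⟩⟩
  obtain ⟨x, hx⟩ := List.exists_mem_of_length_pos (Nat.one_le_two_pow.trans h)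
  exact ⟨x, List.mem_of_mem_filter hx, by simpa using List.of_mem_filter hx⟩

variable {U : BStr →. BStr} (hS : ∀ q x, x ∈ U q ↔ ∃ t, (q, x) ∈ S t)
include hS

lemma length_described_lt (m t : ℕ) : (described S m t).length < 2 ^ m :=
  length_lt_two_pow_of_describable (nodup_accumUnion _ t) fun x hx => by
    obtain ⟨t', -, q, hq, hqx⟩ := mem_described.mp hx
    exact ⟨q, hq, (hS q x).mpr ⟨t', hqx⟩⟩

/-- Each heavy length accounts for `2 ^ d` of the fewer than `2 ^ (j + d)` described strings. -/
lemma length_heavyLengths_lt (d j t : ℕ) : (heavyLengths S d (j + d) t).length < 2 ^ j := by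
  have hmul : (heavyLengths S d (j + d) t).length * 2 ^ d ≤ (described S (j + d) t).length :=
    length_mul_le_of_le_length_filter (nodup_accumUnion _ t) (nodup_accumUnion _ t)
      List.length fun n hn => by
        obtain ⟨t', ht', hn⟩ := mem_heavyLengths.mp hn
        exact hn.trans (lengthClass_suffix _ n ht'.le).length_le
  have := length_described_lt hS (j + d) t
  rw [pow_add] at this
  exact Nat.lt_of_mul_lt_mul_right (hmul.trans_lt this)

end Enumeration

section Machines

open Primrec

variable {S : ℕ → List (BStr × BStr)}

lemma primrec_described (hS : Primrec S) : Primrec₂ (described S) :=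
  primrec_accumUnion <| listFilterMap (hS.comp snd) <|
    (Primrec.ite (nat_lt.comp (list_length.comp (fst.comp snd)) (fst.comp fst))
      (option_some.comp (snd.comp snd)) (const none)).to₂

lemma primrec_lengthClass (hS : Primrec S) :
    Primrec fun x : ℕ × ℕ × ℕ => lengthClass S x.1 x.2.1 x.2.2 :=
  have hlen : PrimrecRel fun (x : BStr) (n : ℕ) => x.length = n :=
    Primrec.eq.comp (list_length.comp fst) snd
  hlen.listFilter.comp ((primrec_described hS).comp fst (snd.comp snd)) (fst.comp snd)

lemma primrec_heavyLengths (hS : Primrec S) :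
    Primrec₂ fun (dm : ℕ × ℕ) t => heavyLengths S dm.1 dm.2 t := by
  have hpow : Primrec₂ ((· ^ ·) : ℕ → ℕ → ℕ) := Primrec₂.unpaired'.1 Nat.Primrec.pow
  have hheavy : PrimrecRel fun (n : ℕ) (dmt : (ℕ × ℕ) × ℕ) =>
      2 ^ dmt.1.1 ≤ (lengthClass S dmt.1.2 n dmt.2).length :=
    nat_le.comp (hpow.comp (const 2) (fst.comp (fst.comp snd)))
      (list_length.comp ((primrec_lengthClass hS).comp
        (pair (snd.comp (fst.comp snd)) (pair fst (snd.comp snd)))))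
  exact primrec_accumUnion (hheavy.listFilter.comp
    (list_map ((primrec_described hS).comp (snd.comp fst) snd) (list_length.comp snd).to₂)
    .id).to₂

variable (S) in
/-- Reads `selfDelim u ++ r` as the threshold exponent `d = binVal u`, the description bound
`|r| + d` and an index `binVal r` into the heavy lengths. -/
def lengthMachine : BStr →. BStr := fun p =>
  (parseSelfDelim p : Part (BStr × BStr)).bind fun ur =>
    (Nat.rfindOpt fun t =>
      (heavyLengths S (binVal ur.1) (ur.2.length + binVal ur.1) t).reverse[binVal ur.2]?).map
      numStr

lemma partrec_lengthMachine (hS : Primrec S) : Partrec (lengthMachine S) := by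
  refine Partrec.bind (Computable.ofOption primrec_parseSelfDelim.to_comp) ?_
  refine (Partrec.rfindOpt (Primrec.to_comp ?_)).map (primrec_numStr.comp snd).to_comp.to₂
  have hur : Primrec fun x : (BStr × (BStr × BStr)) × ℕ => x.1.2 := snd.comp fst
  exact (list_getElem?.comp (list_reverse.comp ((primrec_heavyLengths hS).comp
    (pair (primrec_binVal.comp (fst.comp hur))
      (nat_add.comp (list_length.comp (snd.comp hur)) (primrec_binVal.comp (fst.comp hur))))
    snd)) (primrec_binVal.comp (snd.comp hur))).to₂

lemma numStr_mem_lengthMachine {u r : BStr} {t n : ℕ}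
    (h : (heavyLengths S (binVal u) (r.length + binVal u) t).reverse[binVal r]? = some n) :
    numStr n ∈ lengthMachine S (selfDelim u ++ r) := by
  simp only [lengthMachine, parseSelfDelim_selfDelim_append, Part.coe_some, Part.bind_some]
  exact Part.mem_map _ (mem_rfindOpt_getElem?_reverse (accumUnion_suffix _) h)

/-- With `u` coding `e` in `size e` bits, `binVal u + 2 * u.length` pays for the self-delimited
threshold exponent in `lengthMachine`, and `2 ^ s` absorbs its universality constant. -/
def indexLength (s : ℕ) (u : BStr) : ℕ := binVal u + 2 * u.length + 2 ^ s

variable (S) in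
/-- Reads `selfDelim u ++ r` under the condition `⟨n, k⟩` as `e = binVal u` and an index
`binVal r` into the strings of length `n` with descriptions shorter than `k + e + 1`. -/
def condMachine (s : ℕ) : BStr → ℕ →. BStr := fun p y =>
  (parseSelfDelim p : Part (BStr × BStr)).bind fun ur =>
    Nat.rfindOpt fun t =>
      if ur.2.length = indexLength s ur.1 then
        (lengthClass S (y.unpair.2 + binVal ur.1 + 1) y.unpair.1 t).reverse[binVal ur.2]?
      else none

lemma partrec_condMachine (hS : Primrec S) (s : ℕ) : Partrec₂ (condMachine S s) := by
  refine Partrec.bind (Computable.ofOption (primrec_parseSelfDelim.comp fst).to_comp) ?_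
  refine Partrec.rfindOpt (Primrec.to_comp ?_)
  have hur : Primrec fun x : ((BStr × ℕ) × (BStr × BStr)) × ℕ => x.1.2 := snd.comp fst
  have hy : Primrec fun x : ((BStr × ℕ) × (BStr × BStr)) × ℕ => x.1.1.2.unpair :=
    Primrec.unpair.comp (snd.comp (fst.comp fst))
  have hidx : Primrec (indexLength s) :=
    nat_add.comp (nat_add.comp primrec_binVal (nat_mul.comp (const 2) list_length)) (const _)
  refine Primrec.ite (Primrec.eq.comp (list_length.comp (snd.comp hur))
    (hidx.comp (fst.comp hur))) ?_ (const none)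
  exact list_getElem?.comp (list_reverse.comp ((primrec_lengthClass hS).comp
    (pair (succ.comp (nat_add.comp (snd.comp hy) (primrec_binVal.comp (fst.comp hur))))
      (pair (fst.comp hy) snd)))) (primrec_binVal.comp (snd.comp hur))

lemma parseSelfDelim_of_dom_condMachine {s : ℕ} {p : BStr} {y : ℕ}
    (h : (condMachine S s p y).Dom) :
    ∃ u r, parseSelfDelim p = some (u, r) ∧ r.length = indexLength s u := by
  obtain ⟨x, hx⟩ := Part.dom_iff_mem.mp h
  obtain ⟨⟨u, r⟩, hur, hx⟩ := Part.mem_bind_iff.mp hx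
  obtain ⟨t, ht⟩ := Nat.rfindOpt_spec hx
  refine ⟨u, r, Part.mem_ofOption.mp hur, ?_⟩
  by_contra hne
  simp [hne] at ht

/-- The index field has a length fixed by the self-delimited part, so no valid input extends
another. -/
lemma prefixFreeDomCond_condMachine (s : ℕ) : PrefixFreeDomCond (condMachine S s) := by
  rintro y p p' hp hp' ⟨w, rfl⟩
  obtain ⟨u, r, hur, hr⟩ := parseSelfDelim_of_dom_condMachine hp
  obtain ⟨u', r', hur', hr'⟩ := parseSelfDelim_of_dom_condMachine hp'
  rw [parseSelfDelim_append hur w, Option.some.injEq, Prod.mk.injEq] at hur'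
  obtain ⟨rfl, rfl⟩ := hur'
  have : w.length = 0 := by simp at hr'; omega
  simp [List.length_eq_zero_iff.mp this]

lemma mem_condMachine {s : ℕ} {u r : BStr} (hr : r.length = indexLength s u) {n k t : ℕ}
    {x : BStr} (h : (lengthClass S (k + binVal u + 1) n t).reverse[binVal r]? = some x) :
    x ∈ condMachine S s (selfDelim u ++ r) (Nat.pair n k) := by
  simp only [condMachine, parseSelfDelim_selfDelim_append, Part.coe_some, Part.bind_some,
    Nat.unpair_pair, hr, if_true]
  exact mem_rfindOpt_getElem?_reverse (lengthClass_suffix _ _) h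

end Machines

lemma cpx_le_length {U : BStr →. BStr} {q x : BStr} (h : x ∈ U q) : cpx U x ≤ q.length :=
  Nat.sInf_le ⟨q, rfl, h⟩

lemma cpxCond_le_length {U : BStr → ℕ →. BStr} {q x : BStr} {y : ℕ} (h : x ∈ U q y) :
    cpxCond U x y ≤ q.length :=
  Nat.sInf_le ⟨q, rfl, h⟩

lemma exists_length_eq_cpx {U : BStr →. BStr} (hU : UniversalPlain U) (x : BStr) :
    ∃ q : BStr, q.length = cpx U x ∧ x ∈ U q := by
  obtain ⟨c, hc⟩ := hU.2 (fun p => Part.some p) Partrec.some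
  obtain ⟨q, -, hq⟩ := hc x x (Part.mem_some x)
  exact Nat.sInf_mem (s := {n | ∃ q : BStr, q.length = n ∧ x ∈ U q}) ⟨q.length, q, rfl, hq⟩

lemma size_add_two_mul_size_add_two_pow_le (e s : ℕ) :
    Nat.size (e + 2 * Nat.size e + 2 ^ s) ≤ Nat.size e + s + 2 := by
  refine Nat.size_le.mpr ?_
  have he := Nat.lt_size_self e
  have hℓ : Nat.size e < 2 ^ Nat.size e := Nat.lt_two_pow_self
  have hs : 1 ≤ 2 ^ s := Nat.one_le_two_pow
  have hℓ' : 1 ≤ 2 ^ Nat.size e := Nat.one_le_two_pow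
  rw [pow_add, pow_add]
  nlinarith

lemma four_mul_size_le (e : ℕ) : 4 * Nat.size e ≤ e + 28 := by
  have h1 : e / 4 + 1 ≤ 2 ^ (e / 4) := Nat.lt_two_pow_self
  have h2 : 2 ^ (e / 4 + 2) ≤ 2 ^ ((e + 28) / 4) := Nat.pow_le_pow_right two_pos (by omega)
  have h3 : Nat.size e ≤ (e + 28) / 4 := Nat.size_le.mpr (by rw [pow_add] at h2; omega)
  omega

section Counting

variable {U : BStr →. BStr} {S : ℕ → List (BStr × BStr)}
  (hS : ∀ q x, x ∈ U q ↔ ∃ t, (q, x) ∈ S t) {cV : ℕ}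
  (hcV : ∀ p x, x ∈ lengthMachine S p → ∃ q : BStr, q.length ≤ p.length + cV ∧ x ∈ U q)
include hS hcV

/-- If `2 ^ d` strings of length `n` have descriptions shorter than `m`, then `n` is among fewer
than `2 ^ (m - d)` such lengths, so `lengthMachine` describes `n` by `d` and an index. -/
lemma cpxN_add_le_of_two_pow_le_length_lengthClass {d m n t : ℕ}
    (h : 2 ^ d ≤ (lengthClass S m n t).length) :
    cpxN U n + d ≤ 2 * Nat.size d + 1 + m + cV := by
  have hdm : d < m := (Nat.pow_lt_pow_iff_right one_lt_two).mp <|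
    h.trans_lt ((List.length_filter_le _ _).trans_lt (length_described_lt hS m t))
  obtain ⟨j, rfl⟩ : ∃ j, m = j + d := ⟨m - d, by omega⟩
  have hn : n ∈ (heavyLengths S d (j + d) (t + 1)).reverse :=
    List.mem_reverse.mpr (mem_heavyLengths.mpr ⟨t, Nat.lt_succ_self t, h⟩)
  have hi : (heavyLengths S d (j + d) (t + 1)).reverse.idxOf n < 2 ^ j :=
    (List.idxOf_lt_length_of_mem hn).trans_le
      (by simpa using (length_heavyLengths_lt hS d j (t + 1)).le)
  obtain ⟨u, hu, rfl⟩ := exists_binVal_eq (Nat.lt_size_self d)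
  obtain ⟨r, rfl, hr⟩ := exists_binVal_eq hi
  have hmem : numStr n ∈ lengthMachine S (selfDelim u ++ r) :=
    numStr_mem_lengthMachine (t := t + 1) (by rw [hr]; exact List.getElem?_idxOf hn)
  obtain ⟨q, hq, hnq⟩ := hcV _ _ hmem
  have := cpx_le_length hnq
  simp only [List.length_append, length_selfDelim] at hq
  unfold cpxN
  omega

/-- `2 ^ (cV + 7)` outgrows the overhead `2 * size d + cV` of the previous lemma. -/
lemma length_lengthClass_lt (e n t : ℕ) :
    (lengthClass S (cpxN U n + e + 1) n t).length <
      2 ^ (e + 2 * Nat.size e + 2 ^ (cV + 7)) := by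
  by_contra! h
  have hle := cpxN_add_le_of_two_pow_le_length_lengthClass hS hcV h
  have hsize := size_add_two_mul_size_add_two_pow_le e (cV + 7)
  have hpow : 2 ^ (cV + 7) = 128 * 2 ^ cV := by rw [pow_add]; ring
  have hcV' : cV < 2 ^ cV := Nat.lt_two_pow_self
  omega

lemma exists_condMachine_program (hU : UniversalPlain U) (x : BStr)
    (hx : cpxN U x.length ≤ cpx U x) :
    ∃ p : BStr, p.length ≤ 2 * (cpx U x - cpxN U x.length) + 2 ^ (cV + 7) + 29 ∧
      x ∈ condMachine S (cV + 7) p (Nat.pair x.length (cpxN U x.length)) := by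
  set n := x.length
  set k := cpxN U n
  obtain ⟨e, he⟩ : ∃ e, cpx U x = k + e := ⟨cpx U x - k, by omega⟩
  obtain ⟨q, hq, hxq⟩ := exists_length_eq_cpx hU x
  obtain ⟨t, ht⟩ := (hS q x).mp hxq
  have hxmem : x ∈ (lengthClass S (k + e + 1) n (t + 1)).reverse :=
    List.mem_reverse.mpr (List.mem_filter.mpr
      ⟨mem_described.mpr ⟨t, Nat.lt_succ_self t, q, by omega, ht⟩, by simp [n]⟩)
  have hi : (lengthClass S (k + e + 1) n (t + 1)).reverse.idxOf x <
      2 ^ (e + 2 * Nat.size e + 2 ^ (cV + 7)) :=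
    (List.idxOf_lt_length_of_mem hxmem).trans_le
      (by simpa using (length_lengthClass_lt hS hcV e n (t + 1)).le)
  obtain ⟨u, hu, rfl⟩ := exists_binVal_eq (Nat.lt_size_self e)
  obtain ⟨r, hr, hri⟩ := exists_binVal_eq hi
  refine ⟨selfDelim u ++ r, ?_, mem_condMachine (t := t + 1) (by rw [hr, indexLength, hu]) ?_⟩
  · simp only [List.length_append, length_selfDelim, hr, hu, he]
    have := four_mul_size_le (binVal u)
    omega
  · rw [hri]
    exact List.getElem?_idxOf hxmem

end Counting

/-- there is a constant `c` such that
`K(x ∣ n, C(n)) ≤ 2·(C(x) - C(n)) + c` for every `n` and every string `x`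
of length `n`. -/
theorem conditional_K_le_C_deficiency
    (U : BStr →. BStr) (hU : UniversalPlain U)
    (hlenC : ∀ x : BStr, cpxN U x.length ≤ cpx U x)
    (UKc : BStr → ℕ →. BStr) (hUKc : UniversalPrefixFreeCond UKc) :
    ∃ c : ℤ, ∀ (n : ℕ) (x : BStr), x.length = n →
      (cpxCond UKc x (Nat.pair n (cpxN U n)) : ℤ) ≤
        2 * ((cpx U x : ℤ) - (cpxN U n : ℤ)) + c := by
  obtain ⟨S, hSp, hS⟩ := Partrec.exists_primrec_stages hU.1
  obtain ⟨cV, hcV⟩ := hU.2 _ (partrec_lengthMachine hSp)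
  obtain ⟨cM, hcM⟩ := hUKc.2.2 _ (partrec_condMachine hSp (cV + 7))
    (prefixFreeDomCond_condMachine (cV + 7))
  refine ⟨((2 ^ (cV + 7) + 29 + cM : ℕ) : ℤ), fun n x hx => ?_⟩
  subst hx
  obtain ⟨p, hp, hxp⟩ := exists_condMachine_program hS hcV hU x (hlenC x)
  obtain ⟨q, hq, hxq⟩ := hcM _ _ _ hxp
  have := cpxCond_le_length hxq
  have := hlenC x
  omega
end
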